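/- arXiv:2404.08637 — 3 statements merged into one kernel-verified Lean document; each statement's English description precedes it below -/
import Mathlib

section
/- Let μ : Fin M → ℚ be a positive step-down vector (decreasing, with μ i / μ j a positive integer whenever i ≤ j) with ∑ m, μ m = 1 and such that 1/(μ m) is an integer for every m. Set K = 1/(μ (M−1)), k_m = 1/(μ m), and η_m = μ m · K. Then there exist offsets τ : Fin M → ℕ with τ m < k_m, such that the arithmetic progressions {τ m + c · k_m : 0 ≤ c < η_m} (viewed modulo K) are pairwise disjoint and together partition ZMod K. -/
/-!
The offsets are chosen greedily. Since `k i ∣ k j` for `i < j`, the offset `τ j < k j`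
only has to avoid the residue classes `τ i mod k i` of the earlier matchings, which occupy
`∑_{i<j} k j / k i = k j * ∑_{i<j} μ i ≤ k j - 1` points of `[0, k j)`, so a free offset
exists.
Two progressions with `i < j` can then only meet if `τ j ≡ τ i [MOD k i]`, so they are
disjoint, and as the `m`-th one has `K / k m` points and these numbers add up to `K`,
together they fill `ZMod K`.
-/

open Finset Function

lemma Nat.card_filter_range_modEq_of_dvd {n k : ℕ} (hk : 0 < k) (hkn : k ∣ n) (v : ℕ) :
    #{t ∈ range n | t ≡ v [MOD k]} = n / k := by
  rw [← Nat.count_eq_card_filter_range, Nat.count_modEq_card _ hk, Nat.mod_eq_zero_of_dvd hkn]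
  simp

lemma exists_lt_forall_not_modEq {ι : Type*} (s : Finset ι) (k v : ι → ℕ) {n : ℕ}
    (hkn : ∀ i ∈ s, k i ∣ n) (hroom : ∑ i ∈ s, n / k i < n) :
    ∃ t < n, ∀ i ∈ s, ¬ t ≡ v i [MOD k i] := by
  have hk : ∀ i ∈ s, 0 < k i := by
    intro i hi
    refine Nat.pos_of_ne_zero fun h => ?_
    have hn : n = 0 := zero_dvd_iff.1 (h ▸ hkn i hi)
    omega
  have hcard : #(s.biUnion fun i => {t ∈ range n | t ≡ v i [MOD k i]}) < #(range n) :=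
    calc _ ≤ ∑ i ∈ s, #{t ∈ range n | t ≡ v i [MOD k i]} := card_biUnion_le
      _ = ∑ i ∈ s, n / k i :=
          sum_congr rfl fun i hi => Nat.card_filter_range_modEq_of_dvd (hk i hi) (hkn i hi) _
      _ < #(range n) := by rwa [card_range]
  obtain ⟨t, ht, hbad⟩ := exists_mem_notMem_of_card_lt_card hcard
  refine ⟨t, mem_range.1 ht, fun i hi hti => hbad ?_⟩
  exact mem_biUnion.2 ⟨i, hi, mem_filter.2 ⟨ht, hti⟩⟩

lemma exists_offsets_not_modEq : ∀ {M : ℕ} (k : Fin M → ℕ),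
    (∀ i j, i < j → k i ∣ k j) → (∀ j, ∑ i ∈ Iio j, k j / k i < k j) →
    ∃ τ : Fin M → ℕ, (∀ m, τ m < k m) ∧ ∀ i j, i < j → ¬ τ j ≡ τ i [MOD k i]
  | 0, _, _, _ => ⟨finZeroElim, finZeroElim, finZeroElim⟩
  | M + 1, k, hdvd, hroom => by
    obtain ⟨τ, hτk, hτ⟩ := exists_offsets_not_modEq (fun i => k i.castSucc)
      (fun i j h => hdvd _ _ (Fin.castSucc_lt_castSucc_iff.2 h))
      (fun j => by
        simpa only [Fin.Iio_castSucc, sum_map, Fin.coe_castSuccEmb] using hroom j.castSucc)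
    obtain ⟨t, htk, ht⟩ := exists_lt_forall_not_modEq univ (fun i => k i.castSucc) τ
      (fun i _ => hdvd _ _ (Fin.castSucc_lt_last i))
      (by
        simpa only [Fin.Iio_last_eq_map, sum_map, Fin.coe_castSuccEmb] using hroom (Fin.last M))
    refine ⟨Fin.snoc (α := fun _ => ℕ) τ t, fun m => ?_, fun i j hij => ?_⟩
    · cases m using Fin.lastCases <;> simp [htk, hτk _]
    · obtain ⟨i, rfl⟩ := Fin.exists_castSucc_eq.2 (hij.trans_le j.le_last).ne
      cases j using Fin.lastCases
      · simpa using ht i (mem_univ _)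
      · simpa using hτ i _ (Fin.castSucc_lt_castSucc_iff.1 hij)

lemma sum_div_Iio_lt_of_sum_div_eq {M K : ℕ} (k : Fin M → ℕ) (hK : 0 < K)
    (hdvd : ∀ i j, i < j → k i ∣ k j) (hkK : ∀ m, k m ∣ K) (hsum : ∑ m, K / k m = K)
    (j : Fin M) : ∑ i ∈ Iio j, k j / k i < k j := by
  have hkj : 0 < k j := Nat.pos_of_dvd_of_pos (hkK j) hK
  have hq : 0 < K / k j := Nat.div_pos (Nat.le_of_dvd hK (hkK j)) hkj
  -- scaled by `K / k j`, the claim says `∑_{i ≤ j} K / k i ≤ K`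
  suffices K / k j * (∑ i ∈ Iio j, k j / k i + 1) ≤ K / k j * k j from
    Nat.lt_of_succ_le (Nat.le_of_mul_le_mul_left this hq)
  calc K / k j * (∑ i ∈ Iio j, k j / k i + 1)
      = ∑ i ∈ insert j (Iio j), K / k i := by
        rw [sum_insert (by simp), mul_add, mul_one, mul_sum, add_comm]
        congr 1
        exact sum_congr rfl fun i hi => Nat.div_mul_div (hkK j) (hdvd i j (mem_Iio.1 hi))
    _ ≤ ∑ m, K / k m := sum_le_sum_of_subset (subset_univ _)
    _ = K / k j * k j := by rw [hsum, Nat.div_mul_cancel (hkK j)]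

def modProgression (K a d n : ℕ) : Finset (ZMod K) :=
  (range n).image fun c => ((a + c * d : ℕ) : ZMod K)

lemma coe_modProgression (K a d n : ℕ) :
    (modProgression K a d n : Set (ZMod K)) =
      {x | ∃ c < n, x = ((a + c * d : ℕ) : ZMod K)} := by
  ext x
  simp [modProgression, eq_comm]

lemma card_modProgression {K a d n : ℕ} (hd : 0 < d) (hK : n * d ≤ K) :
    #(modProgression K a d n) = n := by
  rw [modProgression, card_image_of_injOn, card_range]
  intro c hc c' hc' h
  simp only [coe_range, Set.mem_Iio] at hc hc'
  have hlt : ∀ {c}, c < n → c * d < K :=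
    fun h => (Nat.mul_lt_mul_of_pos_right h hd).trans_le hK
  rw [ZMod.natCast_eq_natCast_iff] at h
  have := Nat.ModEq.add_left_cancel' a h
  exact Nat.eq_of_mul_eq_mul_right hd (Nat.ModEq.eq_of_lt_of_lt this (hlt hc) (hlt hc'))

lemma disjoint_modProgression {K a a' d d' n n' : ℕ} (hdK : d ∣ K) (hdd' : d ∣ d')
    (ha : ¬ a' ≡ a [MOD d]) : Disjoint (modProgression K a d n) (modProgression K a' d' n') := by
  simp only [modProgression, disjoint_left, mem_image, mem_range, not_exists, not_and]
  rintro _ ⟨c, -, rfl⟩ c' - h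
  rw [ZMod.natCast_eq_natCast_iff] at h
  have hc : a + c * d ≡ a [MOD d] := Nat.add_modEq_left_iff.2 (dvd_mul_left d c)
  have hc' : a' + c' * d' ≡ a' [MOD d] :=
    Nat.add_modEq_left_iff.2 (dvd_mul_of_dvd_right hdd' c')
  exact ha (hc'.symm.trans ((h.of_dvd hdK).trans hc))

theorem exists_offsets_partition_zmod {M K : ℕ} (k : Fin M → ℕ) (hK : 0 < K)
    (hdvd : ∀ i j, i < j → k i ∣ k j) (hkK : ∀ m, k m ∣ K) (hsum : ∑ m, K / k m = K) :
    ∃ τ : Fin M → ℕ, (∀ m, τ m < k m) ∧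
      Pairwise (Disjoint on fun m => modProgression K (τ m) (k m) (K / k m)) ∧
      ⋃ m, (modProgression K (τ m) (k m) (K / k m) : Set (ZMod K)) = Set.univ := by
  obtain ⟨τ, hτk, hτ⟩ :=
    exists_offsets_not_modEq k hdvd (sum_div_Iio_lt_of_sum_div_eq k hK hdvd hkK hsum)
  have hdisj : Pairwise (Disjoint on fun m => modProgression K (τ m) (k m) (K / k m)) := by
    intro i j hij
    rcases hij.lt_or_gt with h | h
    · exact disjoint_modProgression (hkK i) (hdvd i j h) (hτ i j h)
    · exact (disjoint_modProgression (hkK j) (hdvd j i h) (hτ j i h)).symm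
  refine ⟨τ, hτk, hdisj, ?_⟩
  have : NeZero K := ⟨hK.ne'⟩
  have hU : univ.biUnion (fun m => modProgression K (τ m) (k m) (K / k m)) = univ := by
    refine eq_univ_of_card _ ?_
    rw [card_biUnion (hdisj.set_pairwise _), ZMod.card]
    refine (sum_congr rfl fun m _ => card_modProgression ?_ ?_).trans hsum
    · exact Nat.pos_of_dvd_of_pos (hkK m) hK
    · exact (Nat.div_mul_cancel (hkK m)).le
  refine Set.eq_univ_of_forall fun x => ?_
  obtain ⟨m, -, hm⟩ := mem_biUnion.1 (hU ▸ mem_univ x)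
  exact Set.mem_iUnion.2 ⟨m, hm⟩

lemma Nat.dvd_of_cast_eq_one_div {a b z : ℕ} {x y : ℚ} (ha : (a : ℚ) = 1 / x)
    (hb : (b : ℚ) = 1 / y) (hz : z ≠ 0) (hxy : x = z * y) : a ∣ b := by
  refine ⟨z, Nat.cast_injective (R := ℚ) ?_⟩
  rw [Nat.cast_mul, ha, hb, hxy, one_div_mul_eq_div,
    div_mul_cancel_left₀ (Nat.cast_ne_zero.2 hz), one_div]

lemma Nat.eq_div_of_cast_eq_mul_of_cast_eq_one_div {n d K : ℕ} {x : ℚ} (hx : x ≠ 0)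
    (hn : (n : ℚ) = x * K) (hd : (d : ℚ) = 1 / x) : n = K / d := by
  have hd0 : d ≠ 0 := by rintro rfl; simp at hd; exact hx hd.symm
  refine Nat.eq_div_of_mul_eq_left hd0 (Nat.cast_injective (R := ℚ) ?_)
  rw [Nat.cast_mul, hn, hd]
  field_simp

/-- Regular-schedule existence: for step-down rates summing to 1 with integer
reciprocals `k m = 1/μ m`, schedule length `K = k (M-1)` and counts
`η m = μ m * K`, there exist offsets `τ m < k m` such that the arithmetic
progressions `{τ m + c * k m : c < η m}` modulo `K` are pairwise disjoint and
cover all of `ZMod K`. -/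
theorem stmt3 (M : ℕ) (hM : 0 < M) (μ : Fin M → ℚ)
    (hpos : ∀ m, 0 < μ m)
    (hstep : ∀ i j : Fin M, i ≤ j → ∃ z : ℕ, 0 < z ∧ μ i = (z : ℚ) * μ j)
    (hsum : ∑ m, μ m = 1)
    (k : Fin M → ℕ) (hk : ∀ m, (k m : ℚ) = 1 / μ m)
    (η : Fin M → ℕ) (hη : ∀ m, (η m : ℚ) = μ m * (k ⟨M - 1, by omega⟩ : ℚ)) :
    ∃ τ : Fin M → ℕ, (∀ m, τ m < k m) ∧
      (∀ m m' : Fin M, m ≠ m' →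
        Disjoint {x : ZMod (k ⟨M - 1, by omega⟩) | ∃ c < η m, x = ((τ m + c * k m : ℕ) : ZMod (k ⟨M - 1, by omega⟩))}
                 {x : ZMod (k ⟨M - 1, by omega⟩) | ∃ c < η m', x = ((τ m' + c * k m' : ℕ) : ZMod (k ⟨M - 1, by omega⟩))}) ∧
      (⋃ m : Fin M, {x : ZMod (k ⟨M - 1, by omega⟩) | ∃ c < η m, x = ((τ m + c * k m : ℕ) : ZMod (k ⟨M - 1, by omega⟩))})
        = Set.univ := by
  set K := k ⟨M - 1, by omega⟩
  have hkpos : ∀ m, 0 < k m := fun m =>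
    (Nat.cast_pos (α := ℚ)).1 (by rw [hk]; exact one_div_pos.2 (hpos m))
  have hdvd : ∀ i j : Fin M, i ≤ j → k i ∣ k j := fun i j hij => by
    obtain ⟨z, hz, hμ⟩ := hstep i j hij
    exact Nat.dvd_of_cast_eq_one_div (hk i) (hk j) hz.ne' hμ
  have hkK : ∀ m, k m ∣ K := fun m => hdvd _ _ (Fin.mk_le_mk.2 (Nat.le_sub_one_of_lt m.isLt))
  have hηK : ∀ m, η m = K / k m := fun m =>
    Nat.eq_div_of_cast_eq_mul_of_cast_eq_one_div (hpos m).ne' (hη m) (hk m)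
  have hsumK : ∑ m, K / k m = K := by
    have : ∑ m, (η m : ℚ) = K := by simp_rw [hη, ← sum_mul, hsum, one_mul]
    simp_rw [← hηK]
    exact_mod_cast this
  obtain ⟨τ, hτk, hdisj, hcover⟩ :=
    exists_offsets_partition_zmod k (hkpos _) (fun i j h => hdvd i j h.le) hkK hsumK
  obtain rfl : η = fun m => K / k m := funext hηK
  refine ⟨τ, hτk, fun m m' h => ?_, ?_⟩
  · simpa only [← coe_modProgression, disjoint_coe] using hdisj h
  · simpa only [← coe_modProgression] using hcover
end

section
/- Let μ : Fin n → ℝ be nonnegative with μ e + μ (e+1) ≤ 1 for all adjacent pairs, and let w : Fin n → ℝ be positive slice widths. Then min_e (μ e · w e) ≤ min_{e < n−1} (w e · w (e+1))/(w e + w (e+1)). Moreover, the rates defined by μ e = min( w (e−1)/(w e + w (e−1)), w (e+1)/(w e + w (e+1)) ) (with the boundary links using only their single neighbor) satisfy all adjacency constraints and achieve min_e (μ e · w e) = min_{e} (w e · w (e+1))/(w e + w (e+1)). -/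
/-!
Two adjacent links `e`, `e + 1` share one unit of activation, and the split `μ e = w (e+1)/(w e + w (e+1))`,
`μ (e+1) = w e/(w e + w (e+1))` equalises their throughputs at `w e * w (e+1) / (w e + w (e+1))`.
Any other feasible split shortchanges one of the two links, so no rate vector beats the worst pair.
Conversely the rate `μ*` gives each link the smaller of the two equalising shares offered by its
neighbours: adjacent rates then sum to at most one, and each link's throughput is the value of one of its
two pairs, so the minimum throughput is exactly the minimum pair value.
-/

open Finset

theorem Finset.min'_image_le_min'_image {ι α : Type*} [LinearOrder α] {s t : Finset ι}
    {f g : ι → α} {hs : (s.image f).Nonempty} {ht : (t.image g).Nonempty}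
    (h : ∀ j ∈ t, ∃ i ∈ s, f i ≤ g j) : (s.image f).min' hs ≤ (t.image g).min' ht := by
  refine le_min' _ _ _ fun y hy => ?_
  obtain ⟨j, hj, rfl⟩ := mem_image.mp hy
  obtain ⟨i, hi, hij⟩ := h j hj
  exact (min'_le _ _ (mem_image_of_mem f hi)).trans hij

lemma mul_le_harmonic_or {a b x y : ℝ} (ha : 0 < a) (hb : 0 < b) (hxy : x + y ≤ 1) :
    x * a ≤ a * b / (a + b) ∨ y * b ≤ a * b / (a + b) := by
  by_contra! h
  have hab : 0 < a + b := add_pos ha hb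
  have hx : b / (a + b) < x := by
    rw [div_lt_iff₀ hab]; nlinarith [div_mul_cancel₀ (a * b) hab.ne']
  have hy : a / (a + b) < y := by
    rw [div_lt_iff₀ hab]; nlinarith [div_mul_cancel₀ (a * b) hab.ne']
  have hsum : b / (a + b) + a / (a + b) = 1 := by
    rw [← add_div, add_comm, div_self hab.ne']
  linarith

section Route

variable {n : ℕ} {w : ℕ → ℝ}

theorem throughput_le_bottleneck (hw : ∀ e < n, 0 < w e) {μ : ℕ → ℝ}
    (hadj : ∀ e, e + 1 < n → μ e + μ (e + 1) ≤ 1)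
    {hs : ((range n).image (fun e => μ e * w e)).Nonempty}
    {ht : ((range (n - 1)).image (fun e => w e * w (e + 1) / (w e + w (e + 1)))).Nonempty} :
    ((range n).image (fun e => μ e * w e)).min' hs ≤
      ((range (n - 1)).image (fun e => w e * w (e + 1) / (w e + w (e + 1)))).min' ht := by
  refine min'_image_le_min'_image fun e he => ?_
  have he : e + 1 < n := by rw [mem_range] at he; omega
  rcases mul_le_harmonic_or (hw e (by omega)) (hw (e + 1) he) (hadj e he) with h | h
  · exact ⟨e, mem_range.mpr (by omega), h⟩
  · exact ⟨e + 1, mem_range.mpr he, h⟩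

variable (n w) in
noncomputable def fairRate (e : ℕ) : ℝ :=
  if e = 0 then w 1 / (w 0 + w 1)
  else if e = n - 1 then w (n - 2) / (w (n - 1) + w (n - 2))
  else min (w (e - 1) / (w e + w (e - 1))) (w (e + 1) / (w e + w (e + 1)))

lemma fairRate_le {e : ℕ} (he : e + 1 < n) :
    fairRate n w e ≤ w (e + 1) / (w e + w (e + 1)) := by
  unfold fairRate
  split_ifs with h0 h1
  · subst h0; rfl
  · omega
  · exact min_le_right _ _

lemma fairRate_succ_le {e : ℕ} (he : e + 1 < n) :
    fairRate n w (e + 1) ≤ w e / (w (e + 1) + w e) := by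
  rw [fairRate, if_neg (by omega)]
  split_ifs with h
  · obtain rfl : n = e + 2 := by omega
    rfl
  · rw [Nat.add_sub_cancel]
    exact min_le_left _ _

lemma fairRate_add_fairRate_succ_le_one (hw : ∀ e < n, 0 < w e) {e : ℕ} (he : e + 1 < n) :
    fairRate n w e + fairRate n w (e + 1) ≤ 1 := by
  have hpos : 0 < w e + w (e + 1) := add_pos (hw e (by omega)) (hw (e + 1) he)
  have hsum : w (e + 1) / (w e + w (e + 1)) + w e / (w (e + 1) + w e) = 1 := by
    rw [add_comm (w (e + 1)) (w e), ← add_div, add_comm (w (e + 1)), div_self hpos.ne']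
  linarith [fairRate_le (w := w) he, fairRate_succ_le (w := w) he]

lemma fairRate_mul_le (hw : ∀ e < n, 0 < w e) {e : ℕ} (he : e + 1 < n) :
    fairRate n w e * w e ≤ w e * w (e + 1) / (w e + w (e + 1)) :=
  calc fairRate n w e * w e ≤ w (e + 1) / (w e + w (e + 1)) * w e :=
        mul_le_mul_of_nonneg_right (fairRate_le he) (hw e (by omega)).le
    _ = w e * w (e + 1) / (w e + w (e + 1)) := by ring

lemma exists_pair_eq_fairRate_mul (hn : 2 ≤ n) {e : ℕ} (he : e < n) :
    ∃ e' < n - 1, w e' * w (e' + 1) / (w e' + w (e' + 1)) = fairRate n w e * w e := by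
  unfold fairRate
  split_ifs with h0 h1
  · exact ⟨0, by omega, by subst h0; ring⟩
  · refine ⟨n - 2, by omega, ?_⟩
    rw [show n - 2 + 1 = n - 1 by omega, h1]
    ring
  · rcases min_choice (w (e - 1) / (w e + w (e - 1))) (w (e + 1) / (w e + w (e + 1))) with h | h
    · refine ⟨e - 1, by omega, ?_⟩
      rw [h, show e - 1 + 1 = e by omega]
      ring
    · exact ⟨e, by omega, by rw [h]; ring⟩

end Route

/-- Throughput-optimal rates under primary interference on a route of `n ≥ 2`
links with positive slice widths `w`. (1) Any nonnegative rates `μ` satisfying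
the adjacency constraints `μ e + μ (e+1) ≤ 1` support throughput
`min_e (μ e * w e)` at most the bottleneck value
`min_{e} w e * w (e+1) / (w e + w (e+1))`. (2) The rates
`μ* e = min (w (e-1)/(w e + w (e-1))) (w (e+1)/(w e + w (e+1)))` (boundary links
using their single neighbor) satisfy all adjacency constraints and achieve the
bottleneck value exactly. -/
theorem stmt9 (n : ℕ) (hn : 2 ≤ n) (w : ℕ → ℝ) (hw : ∀ e < n, 0 < w e)
    (μ : ℕ → ℝ)
    (hadj : ∀ e, e + 1 < n → μ e + μ (e + 1) ≤ 1)
    (μstar : ℕ → ℝ)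
    (hμstar : ∀ e < n, μstar e =
        if e = 0 then w 1 / (w 0 + w 1)
        else if e = n - 1 then w (n - 2) / (w (n - 1) + w (n - 2))
        else min (w (e - 1) / (w e + w (e - 1))) (w (e + 1) / (w e + w (e + 1)))) :
    (((Finset.range n).image (fun e => μ e * w e)).min'
        ((Finset.nonempty_range_iff.mpr (by omega)).image _) ≤
      ((Finset.range (n - 1)).image (fun e => w e * w (e + 1) / (w e + w (e + 1)))).min'
        ((Finset.nonempty_range_iff.mpr (by omega)).image _)) ∧
    (∀ e, e + 1 < n → μstar e + μstar (e + 1) ≤ 1) ∧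
    (((Finset.range n).image (fun e => μstar e * w e)).min'
        ((Finset.nonempty_range_iff.mpr (by omega)).image _) =
      ((Finset.range (n - 1)).image (fun e => w e * w (e + 1) / (w e + w (e + 1)))).min'
        ((Finset.nonempty_range_iff.mpr (by omega)).image _)) := by
  have hfair : ∀ e < n, μstar e = fairRate n w e := hμstar
  refine ⟨throughput_le_bottleneck hw hadj, fun e he => ?_, le_antisymm ?_ ?_⟩
  · rw [hfair e (by omega), hfair (e + 1) he]
    exact fairRate_add_fairRate_succ_le_one hw he
  · refine min'_image_le_min'_image fun e he => ?_
    have he : e + 1 < n := by rw [mem_range] at he; omega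
    exact ⟨e, mem_range.mpr (by omega), by rw [hfair e (by omega)]; exact fairRate_mul_le hw he⟩
  · refine min'_image_le_min'_image fun e he => ?_
    rw [mem_range] at he
    obtain ⟨e', he', h⟩ := exists_pair_eq_fairRate_mul (w := w) hn he
    exact ⟨e', mem_range.mpr he', by rw [hfair e he, ← h]⟩
end

section
/- Histogram domination implies area domination: let a : Fin p → ℝ and b : Fin q → ℝ be nonnegative decreasing (antitone) sequences with p ≤ q, and suppose a i ≥ b i for all i < p (identifying Fin p indices with the first p indices of Fin q). Define step functions on [0, E) by horizontally scaling: H_a(x) = a(⌊x·p/E⌋) and H_b(x) = b(⌊x·q/E⌋) for a common E > 0. Then ∑_i b i ≤ (q/p)·∑_i a i. -/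
/-!
Split `∑ b` into the first `p` terms and the remaining `q - p`. Since `b` is antitone, each
of the remaining terms is at most every one of the first `p`, hence at most their average;
so `p • ∑ b ≤ q • ∑_{i < p} b i`, and the first `p` terms of `b` are dominated by `a`.
-/

open Finset

theorem Finset.card_nsmul_sum_le_card_nsmul_sum_of_le {ι κ M : Type*} [AddCommMonoid M]
    [PartialOrder M] [IsOrderedAddMonoid M] {s : Finset ι} {t : Finset κ} {f : ι → M}
    {g : κ → M} (hgf : ∀ i ∈ s, ∀ j ∈ t, g j ≤ f i) :
    #s • ∑ j ∈ t, g j ≤ #t • ∑ i ∈ s, f i := by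
  calc #s • ∑ j ∈ t, g j = ∑ i ∈ s, ∑ j ∈ t, g j := (sum_const _).symm
    _ ≤ ∑ i ∈ s, ∑ _j ∈ t, f i := sum_le_sum fun i hi => sum_le_sum fun j hj => hgf i hi j hj
    _ = #t • ∑ i ∈ s, f i := by simp only [sum_const, smul_sum]

theorem Antitone.nsmul_sum_le_nsmul_sum_castLE {M : Type*} [AddCommMonoid M] [PartialOrder M]
    [IsOrderedAddMonoid M] {m n : ℕ} (h : m ≤ n) {f : Fin n → M} (hf : Antitone f) :
    m • ∑ j, f j ≤ n • ∑ i : Fin m, f (Fin.castLE h i) := by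
  obtain ⟨k, rfl⟩ := Nat.exists_eq_add_of_le h
  have htail : m • ∑ j : Fin k, f (Fin.natAdd m j) ≤ k • ∑ i : Fin m, f (Fin.castAdd k i) := by
    simpa using card_nsmul_sum_le_card_nsmul_sum_of_le (s := univ) (t := univ)
      fun (i : Fin m) _ (j : Fin k) _ => hf (i.isLt.le.trans (Nat.le_add_right m j))
  calc m • ∑ j, f j
      = m • ∑ i : Fin m, f (Fin.castAdd k i) + m • ∑ j : Fin k, f (Fin.natAdd m j) := by
        rw [Fin.sum_univ_add, nsmul_add]
    _ ≤ m • ∑ i : Fin m, f (Fin.castAdd k i) + k • ∑ i : Fin m, f (Fin.castAdd k i) :=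
        add_le_add_right htail _
    _ = (m + k) • ∑ i : Fin m, f (Fin.castLE h i) := by rw [← add_nsmul]; rfl

theorem stmt18_general (p q : ℕ) (hpq : p ≤ q)
    (a : Fin p → ℝ) (b : Fin q → ℝ)
    (hb : Antitone b)
    (hab : ∀ i : Fin p, b (Fin.castLE hpq i) ≤ a i) :
    (p : ℝ) * ∑ j, b j ≤ (q : ℝ) * ∑ i, a i := by
  calc (p : ℝ) * ∑ j, b j ≤ q * ∑ i : Fin p, b (Fin.castLE hpq i) := by
        simpa only [nsmul_eq_mul] using hb.nsmul_sum_le_nsmul_sum_castLE hpq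
    _ ≤ q * ∑ i, a i := by gcongr with i; exact hab i

/-- Histogram domination implies area domination: for nonnegative antitone
`a : Fin p → ℝ` and `b : Fin q → ℝ` with `0 < p ≤ q` and `b` pointwise dominated
by `a` on the first `p` coordinates, we have `p * ∑ b ≤ q * ∑ a`. -/
theorem stmt18 (p q : ℕ) (hp : 0 < p) (hpq : p ≤ q)
    (a : Fin p → ℝ) (b : Fin q → ℝ)
    (ha : Antitone a) (hb : Antitone b)
    (ha0 : ∀ i, 0 ≤ a i) (hb0 : ∀ j, 0 ≤ b j)
    (hab : ∀ i : Fin p, b (Fin.castLE hpq i) ≤ a i) :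
    (p : ℝ) * ∑ j, b j ≤ (q : ℝ) * ∑ i, a i :=
  stmt18_general p q hpq a b hb hab
end
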